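/- arXiv:2502.19853 — 3 statements merged into one kernel-verified Lean document; each statement's English description precedes it below -/
import Mathlib

section
/- Non-abelian Snake Lemma: given a commutative diagram of (not necessarily abelian) groups with exact rows G₁ → G₂ →^s G₃ → 1 and 1 → H₁ → H₂ → H₃, vertical homomorphisms v : G₁ → H₁, w : G₂ → H₂, r : G₃ → H₃ making the squares commute, and exact columns continuing to cokernels u : H₁ → K₁, H₂ → K₂, H₃ → K₃ (each column G_i → H_i → K_i → 1 exact at H_i and K_i), there exists a connecting homomorphism Δ : ker(r) → K₁ such that the sequence ker(v) → ker(w) → ker(r) →^Δ K₁ →^t K₂ → K₃ is exact. -/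
/-- Exactness of a pair of group homomorphisms at the middle group:
the kernel of `g` equals the range of `f`. -/
def HomExact {A B C : Type*} [Group A] [Group B] [Group C]
    (f : A →* B) (g : B →* C) : Prop :=
  ∀ b : B, g b = 1 ↔ b ∈ Set.range f

/-- The restriction of `f : G₁ →* G₂` to a map `ker v →* ker w`, given a commuting
square `ι ∘ v = w ∘ f`. -/
def kerMap {G₁ G₂ H₁ H₂ : Type*} [Group G₁] [Group G₂] [Group H₁] [Group H₂]
    (f : G₁ →* G₂) (v : G₁ →* H₁) (w : G₂ →* H₂) (ι : H₁ →* H₂)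
    (hsq : ∀ g, ι (v g) = w (f g)) : v.ker →* w.ker :=
  (f.comp v.ker.subtype).codRestrict w.ker (fun x => by
    have hx : v (x : G₁) = 1 := x.2
    have : w (f (x : G₁)) = 1 := by rw [← hsq, hx, map_one]
    simpa [MonoidHom.mem_ker] using this)

/-!
The connecting map sends `x ∈ ker r` to `u₁ h`, where `g ∈ G₂` lifts `x` along `s` and
`h ∈ H₁` lifts `w g` along `ι` (it exists because `j (w g) = r x = 1`). Two choices of `g`
differ by some `f a`, so the two choices of `h` differ by `v a`, which `u₁` kills.
-/

theorem HomExact.apply_apply_eq_one {A B C : Type*} [Group A] [Group B] [Group C]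
    {f : A →* B} {g : B →* C} (hfg : HomExact f g) (a : A) : g (f a) = 1 :=
  (hfg (f a)).2 ⟨a, rfl⟩

@[simp]
theorem kerMap_apply_coe {G₁ G₂ H₁ H₂ : Type*}
    [Group G₁] [Group G₂] [Group H₁] [Group H₂]
    (f : G₁ →* G₂) (v : G₁ →* H₁) (w : G₂ →* H₂) (ι : H₁ →* H₂)
    (hsq : ∀ g, ι (v g) = w (f g)) (x : v.ker) :
    (kerMap f v w ι hsq x : G₂) = f x :=
  rfl

namespace Snake

variable {G₁ G₂ G₃ H₁ H₂ H₃ K₁ K₂ K₃ : Type*}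
  [Group G₁] [Group G₂] [Group G₃] [Group H₁] [Group H₂] [Group H₃]
  [Group K₁] [Group K₂] [Group K₃]
  {f : G₁ →* G₂} {s : G₂ →* G₃} {ι : H₁ →* H₂} {j : H₂ →* H₃}
  {v : G₁ →* H₁} {w : G₂ →* H₂} {r : G₃ →* H₃}
  {u₁ : H₁ →* K₁} {u₂ : H₂ →* K₂} {u₃ : H₃ →* K₃}
  {t : K₁ →* K₂} {t' : K₂ →* K₃}

def IsConnectingHom (s : G₂ →* G₃) (ι : H₁ →* H₂) (w : G₂ →* H₂)
    (u₁ : H₁ →* K₁) (Δ : r.ker →* K₁) : Prop :=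
  ∀ (x : r.ker) g h, s g = x → ι h = w g → Δ x = u₁ h

theorem exists_lifts (hs : Function.Surjective s) (hrow2 : HomExact ι j)
    (hsq2 : ∀ g, j (w g) = r (s g)) (x : r.ker) :
    ∃ g h, s g = x ∧ ι h = w g := by
  obtain ⟨g, hg⟩ := hs x
  have hjwg : j (w g) = 1 := by rw [hsq2, hg, x.2]
  obtain ⟨h, hh⟩ := (hrow2 _).1 hjwg
  exact ⟨g, h, hg, hh⟩

theorem map_eq_of_lifts (hrow1 : HomExact f s) (hι : Function.Injective ι)
    (hsq1 : ∀ g, ι (v g) = w (f g)) (hcol1 : HomExact v u₁)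
    {g g' : G₂} {h h' : H₁} (hgg' : s g = s g') (hh : ι h = w g) (hh' : ι h' = w g') :
    u₁ h = u₁ h' := by
  obtain ⟨a, ha⟩ := (hrow1 (g⁻¹ * g')).1 (by rw [map_mul, map_inv, hgg', inv_mul_cancel])
  have hva : h * v a = h' :=
    hι (by rw [map_mul, hsq1, ha, hh, hh', map_mul, map_inv, mul_inv_cancel_left])
  rw [← hva, map_mul, hcol1.apply_apply_eq_one, mul_one]

theorem exists_connectingHom (hrow1 : HomExact f s) (hs : Function.Surjective s)
    (hι : Function.Injective ι) (hrow2 : HomExact ι j)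
    (hsq1 : ∀ g, ι (v g) = w (f g)) (hsq2 : ∀ g, j (w g) = r (s g))
    (hcol1 : HomExact v u₁) :
    ∃ Δ : r.ker →* K₁, IsConnectingHom s ι w u₁ Δ := by
  choose g h hg hh using exists_lifts hs hrow2 hsq2
  have hΔ : ∀ (x : r.ker) g' h', s g' = x → ι h' = w g' → u₁ (h x) = u₁ h' :=
    fun x g' h' hg' hh' =>
      map_eq_of_lifts hrow1 hι hsq1 hcol1 (by rw [hg, hg']) (hh x) hh'
  refine ⟨MonoidHom.mk' (fun x => u₁ (h x)) fun x y => ?_, hΔ⟩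
  rw [← map_mul]
  exact hΔ (x * y) (g x * g y) (h x * h y) (by rw [map_mul, hg, hg]; rfl)
    (by rw [map_mul, map_mul, hh, hh])

theorem homExact_kerMap_kerMap (hrow1 : HomExact f s) (hι : Function.Injective ι)
    (hsq1 : ∀ g, ι (v g) = w (f g)) (hsq2 : ∀ g, j (w g) = r (s g)) :
    HomExact (kerMap f v w ι hsq1) (kerMap s w r j hsq2) := by
  intro b
  constructor
  · intro hb
    obtain ⟨a, ha⟩ := (hrow1 b).1 (congrArg Subtype.val hb)
    have hva : v a = 1 := hι (by rw [hsq1, ha, b.2, map_one])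
    exact ⟨⟨a, hva⟩, Subtype.ext ha⟩
  · rintro ⟨a, rfl⟩
    exact Subtype.ext (hrow1.apply_apply_eq_one a)

theorem homExact_kerMap_connectingHom (hrow1 : HomExact f s) (hs : Function.Surjective s)
    (hrow2 : HomExact ι j) (hsq1 : ∀ g, ι (v g) = w (f g)) (hsq2 : ∀ g, j (w g) = r (s g))
    (hcol1 : HomExact v u₁) {Δ : r.ker →* K₁}
    (hΔ : IsConnectingHom s ι w u₁ Δ) :
    HomExact (kerMap s w r j hsq2) Δ := by
  intro x
  constructor
  · intro hx
    obtain ⟨g, h, hg, hh⟩ := exists_lifts hs hrow2 hsq2 x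
    obtain ⟨a, ha⟩ := (hcol1 h).1 (by rw [← hΔ x g h hg hh, hx])
    have hw : w (g * (f a)⁻¹) = 1 := by
      rw [map_mul, map_inv, ← hsq1, ha, hh, mul_inv_cancel]
    refine ⟨⟨g * (f a)⁻¹, hw⟩, Subtype.ext ?_⟩
    rw [kerMap_apply_coe, map_mul, map_inv, hg, hrow1.apply_apply_eq_one, inv_one, mul_one]
  · rintro ⟨b, rfl⟩
    rw [hΔ _ b 1 rfl (by rw [map_one, b.2]), map_one]

theorem homExact_connectingHom_map (hs : Function.Surjective s) (hrow2 : HomExact ι j)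
    (hsq2 : ∀ g, j (w g) = r (s g)) (hsq3 : ∀ h, t (u₁ h) = u₂ (ι h))
    (hcol2 : HomExact w u₂) (hu₁ : Function.Surjective u₁) {Δ : r.ker →* K₁}
    (hΔ : IsConnectingHom s ι w u₁ Δ) :
    HomExact Δ t := by
  intro k
  constructor
  · intro hk
    obtain ⟨h, rfl⟩ := hu₁ k
    obtain ⟨g, hg⟩ := (hcol2 (ι h)).1 (by rw [← hsq3, hk])
    have hrsg : r (s g) = 1 := by rw [← hsq2, hg, hrow2.apply_apply_eq_one]
    exact ⟨⟨s g, hrsg⟩, hΔ _ g h rfl hg.symm⟩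
  · rintro ⟨x, rfl⟩
    obtain ⟨g, h, hg, hh⟩ := exists_lifts hs hrow2 hsq2 x
    rw [hΔ x g h hg hh, hsq3, hh, hcol2.apply_apply_eq_one]

theorem homExact_map_map (hs : Function.Surjective s) (hrow2 : HomExact ι j)
    (hsq2 : ∀ g, j (w g) = r (s g)) (hsq3 : ∀ h, t (u₁ h) = u₂ (ι h))
    (hsq4 : ∀ h, t' (u₂ h) = u₃ (j h)) (hcol2 : HomExact w u₂) (hcol3 : HomExact r u₃)
    (hu₁ : Function.Surjective u₁) (hu₂ : Function.Surjective u₂) :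
    HomExact t t' := by
  intro k
  constructor
  · intro hk
    obtain ⟨h₂, rfl⟩ := hu₂ k
    obtain ⟨x, hx⟩ := (hcol3 (j h₂)).1 (by rw [← hsq4, hk])
    obtain ⟨g, rfl⟩ := hs x
    have hj : j (h₂ * (w g)⁻¹) = 1 := by rw [map_mul, map_inv, hsq2, hx, mul_inv_cancel]
    obtain ⟨h₁, hh₁⟩ := (hrow2 _).1 hj
    refine ⟨u₁ h₁, ?_⟩
    rw [hsq3, hh₁, map_mul, map_inv, hcol2.apply_apply_eq_one, inv_one, mul_one]
  · rintro ⟨k₁, rfl⟩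
    obtain ⟨h₁, rfl⟩ := hu₁ k₁
    rw [hsq3, hsq4, hrow2.apply_apply_eq_one, map_one]

end Snake

theorem snake_lemma_general
    {G₁ G₂ G₃ H₁ H₂ H₃ K₁ K₂ K₃ : Type*}
    [Group G₁] [Group G₂] [Group G₃] [Group H₁] [Group H₂] [Group H₃]
    [Group K₁] [Group K₂] [Group K₃]
    (f : G₁ →* G₂) (s : G₂ →* G₃)
    (ι : H₁ →* H₂) (j : H₂ →* H₃)
    (v : G₁ →* H₁) (w : G₂ →* H₂) (r : G₃ →* H₃)
    (u₁ : H₁ →* K₁) (u₂ : H₂ →* K₂) (u₃ : H₃ →* K₃)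
    (t : K₁ →* K₂) (t' : K₂ →* K₃)
    -- top row exact at G₂ and at G₃ (`s` surjective)
    (hrow1 : HomExact f s) (hs : Function.Surjective s)
    -- bottom row exact at H₁ (`ι` injective) and at H₂
    (hι : Function.Injective ι) (hrow2 : HomExact ι j)
    -- commuting squares
    (hsq1 : ∀ g, ι (v g) = w (f g))
    (hsq2 : ∀ g, j (w g) = r (s g))
    (hsq3 : ∀ h, t (u₁ h) = u₂ (ι h))
    (hsq4 : ∀ h, t' (u₂ h) = u₃ (j h))
    -- columns exact at H_i and at K_i (the `u_i` are surjections onto the cokernels)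
    (hcol1 : HomExact v u₁) (hu₁ : Function.Surjective u₁)
    (hcol2 : HomExact w u₂) (hu₂ : Function.Surjective u₂)
    (hcol3 : HomExact r u₃) :
    ∃ Δ : r.ker →* K₁,
      HomExact (kerMap f v w ι hsq1) (kerMap s w r j hsq2) ∧
      HomExact (kerMap s w r j hsq2) Δ ∧
      HomExact Δ t ∧
      HomExact t t' := by
  obtain ⟨Δ, hΔ⟩ := Snake.exists_connectingHom hrow1 hs hι hrow2 hsq1 hsq2 hcol1
  exact ⟨Δ, Snake.homExact_kerMap_kerMap hrow1 hι hsq1 hsq2,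
    Snake.homExact_kerMap_connectingHom hrow1 hs hrow2 hsq1 hsq2 hcol1 hΔ,
    Snake.homExact_connectingHom_map hs hrow2 hsq2 hsq3 hcol2 hu₁ hΔ,
    Snake.homExact_map_map hs hrow2 hsq2 hsq3 hsq4 hcol2 hcol3 hu₁ hu₂⟩

/-- Non-abelian Snake Lemma. -/
theorem snake_lemma
    {G₁ G₂ G₃ H₁ H₂ H₃ K₁ K₂ K₃ : Type*}
    [Group G₁] [Group G₂] [Group G₃] [Group H₁] [Group H₂] [Group H₃]
    [Group K₁] [Group K₂] [Group K₃]
    (f : G₁ →* G₂) (s : G₂ →* G₃)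
    (ι : H₁ →* H₂) (j : H₂ →* H₃)
    (v : G₁ →* H₁) (w : G₂ →* H₂) (r : G₃ →* H₃)
    (u₁ : H₁ →* K₁) (u₂ : H₂ →* K₂) (u₃ : H₃ →* K₃)
    (t : K₁ →* K₂) (t' : K₂ →* K₃)
    -- top row exact at G₂ and at G₃ (`s` surjective)
    (hrow1 : HomExact f s) (hs : Function.Surjective s)
    -- bottom row exact at H₁ (`ι` injective) and at H₂
    (hι : Function.Injective ι) (hrow2 : HomExact ι j)
    -- commuting squares
    (hsq1 : ∀ g, ι (v g) = w (f g))
    (hsq2 : ∀ g, j (w g) = r (s g))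
    (hsq3 : ∀ h, t (u₁ h) = u₂ (ι h))
    (hsq4 : ∀ h, t' (u₂ h) = u₃ (j h))
    -- columns exact at H_i and at K_i (the `u_i` are surjections onto the cokernels)
    (hcol1 : HomExact v u₁) (hu₁ : Function.Surjective u₁)
    (hcol2 : HomExact w u₂) (hu₂ : Function.Surjective u₂)
    (hcol3 : HomExact r u₃) (hu₃ : Function.Surjective u₃) :
    ∃ Δ : r.ker →* K₁,
      HomExact (kerMap f v w ι hsq1) (kerMap s w r j hsq2) ∧
      HomExact (kerMap s w r j hsq2) Δ ∧
      HomExact Δ t ∧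
      HomExact t t' :=
  snake_lemma_general f s ι j v w r u₁ u₂ u₃ t t' hrow1 hs hι hrow2 hsq1 hsq2 hsq3 hsq4 hcol1 hu₁
    hcol2 hu₂ hcol3
end

section
/- In the setting of the non-abelian snake lemma, if the induced map t : K₁ → K₂ is injective, then the restriction s|_{ker(w)} : ker(w) → ker(r) is surjective. -/
namespace HomExact

variable {A B C : Type*} [Group A] [Group B] [Group C] {f : A →* B} {g : B →* C}

theorem apply_apply_eq_one_s1 (hfg : HomExact f g) (a : A) : g (f a) = 1 :=
  (hfg (f a)).2 ⟨a, rfl⟩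

theorem exists_apply_eq (hfg : HomExact f g) {b : B} (hb : g b = 1) : ∃ a, f a = b :=
  (hfg b).1 hb

theorem apply_mul_inv (hfg : HomExact f g) (b : B) (a : A) : g (b * (f a)⁻¹) = g b := by
  rw [map_mul, map_inv, hfg.apply_apply_eq_one_s1, inv_one, mul_one]

end HomExact

theorem exists_apply_eq_of_apply_mem_range {G₁ G₂ H₁ H₂ K₁ K₂ : Type*}
    [Group G₁] [Group G₂] [Group H₁] [Group H₂] [Group K₁] [Group K₂]
    {ι : H₁ →* H₂} {v : G₁ →* H₁} {w : G₂ →* H₂}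
    {u₁ : H₁ →* K₁} {u₂ : H₂ →* K₂} {t : K₁ →* K₂}
    (hsq : ∀ h, t (u₁ h) = u₂ (ι h)) (hcol1 : HomExact v u₁) (hcol2 : HomExact w u₂)
    (ht : Function.Injective t) {h : H₁} {b : G₂} (hb : w b = ι h) :
    ∃ a, v a = h := by
  have htu : t (u₁ h) = t 1 := by
    rw [hsq, ← hb, hcol2.apply_apply_eq_one_s1, map_one]
  exact hcol1.exists_apply_eq (ht htu)

theorem snake_lemma_surjective_on_kernels_general
    {G₁ G₂ G₃ H₁ H₂ H₃ K₁ K₂ : Type*}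
    [Group G₁] [Group G₂] [Group G₃] [Group H₁] [Group H₂] [Group H₃]
    [Group K₁] [Group K₂]
    (f : G₁ →* G₂) (s : G₂ →* G₃)
    (ι : H₁ →* H₂) (j : H₂ →* H₃)
    (v : G₁ →* H₁) (w : G₂ →* H₂) (r : G₃ →* H₃)
    (u₁ : H₁ →* K₁) (u₂ : H₂ →* K₂)
    (t : K₁ →* K₂)
    (hrow1 : HomExact f s) (hs : Function.Surjective s)
    (hrow2 : HomExact ι j)
    (hsq1 : ∀ g, ι (v g) = w (f g))
    (hsq2 : ∀ g, j (w g) = r (s g))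
    (hsq3 : ∀ h, t (u₁ h) = u₂ (ι h))
    (hcol1 : HomExact v u₁)
    (hcol2 : HomExact w u₂)
    (ht : Function.Injective t) :
    ∀ c ∈ r.ker, ∃ b ∈ w.ker, s b = c := by
  intro c hc
  obtain ⟨b, rfl⟩ := hs c
  obtain ⟨h, hh⟩ := hrow2.exists_apply_eq ((hsq2 b).trans hc)
  obtain ⟨a, rfl⟩ := exists_apply_eq_of_apply_mem_range hsq3 hcol1 hcol2 ht hh.symm
  refine ⟨b * (f a)⁻¹, ?_, hrow1.apply_mul_inv b a⟩
  rw [MonoidHom.mem_ker, map_mul, map_inv, ← hsq1, hh, mul_inv_cancel]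

/-- In the snake-lemma diagram, if the induced map `t : K₁ →* K₂` between the
cokernels is injective, then the restriction of `s` to `ker w` maps onto `ker r`. -/
theorem snake_lemma_surjective_on_kernels
    {G₁ G₂ G₃ H₁ H₂ H₃ K₁ K₂ K₃ : Type*}
    [Group G₁] [Group G₂] [Group G₃] [Group H₁] [Group H₂] [Group H₃]
    [Group K₁] [Group K₂] [Group K₃]
    (f : G₁ →* G₂) (s : G₂ →* G₃)
    (ι : H₁ →* H₂) (j : H₂ →* H₃)
    (v : G₁ →* H₁) (w : G₂ →* H₂) (r : G₃ →* H₃)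
    (u₁ : H₁ →* K₁) (u₂ : H₂ →* K₂) (u₃ : H₃ →* K₃)
    (t : K₁ →* K₂) (t' : K₂ →* K₃)
    (hrow1 : HomExact f s) (hs : Function.Surjective s)
    (hι : Function.Injective ι) (hrow2 : HomExact ι j)
    (hsq1 : ∀ g, ι (v g) = w (f g))
    (hsq2 : ∀ g, j (w g) = r (s g))
    (hsq3 : ∀ h, t (u₁ h) = u₂ (ι h))
    (hsq4 : ∀ h, t' (u₂ h) = u₃ (j h))
    (hcol1 : HomExact v u₁) (hu₁ : Function.Surjective u₁)
    (hcol2 : HomExact w u₂) (hu₂ : Function.Surjective u₂)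
    (hcol3 : HomExact r u₃) (hu₃ : Function.Surjective u₃)
    (ht : Function.Injective t) :
    ∀ c ∈ r.ker, ∃ b ∈ w.ker, s b = c :=
  snake_lemma_surjective_on_kernels_general f s ι j v w r u₁ u₂ t hrow1 hs hrow2 hsq1 hsq2 hsq3
    hcol1 hcol2 ht
end

section
/- The connecting homomorphism in the non-abelian snake lemma is well defined: if α ∈ ker(r) and β, β' ∈ G₂ satisfy s(β) = s(β') = α, then w(β) and w(β') lie in H₁ (identified with its image in H₂) and u(w(β)) = u(w(β')) in K₁. -/
/-!
Both `w β` and `w β'` are killed by `j`, since `j ∘ w = r ∘ s` and `r α = 1`, so they come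
from `H₁` by exactness of the bottom row. As `s β = s β'`, exactness of the top row gives
`β'⁻¹ β = f g`; pushing this through the left square and the injective `ι` shows that the two
preimages differ by `v g`, which `u` kills.
-/

namespace HomExact

variable {A B C : Type*} [Group A] [Group B] [Group C] {f : A →* B} {g : B →* C}

theorem map_eq_map_iff (h : HomExact f g) (b b' : B) :
    g b = g b' ↔ b'⁻¹ * b ∈ Set.range f := by
  rw [← h, map_mul, map_inv, inv_mul_eq_one, eq_comm]

theorem mem_range_of_comp_eq {D E : Type*} [Group D] [Group E]
    (h : HomExact f g) {w : D →* B} {s : D →* E} {r : E →* C}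
    (hsq : ∀ d, g (w d) = r (s d)) {d : D} (hd : r (s d) = 1) :
    w d ∈ Set.range f :=
  (h _).mp (by rw [hsq, hd])

end HomExact

theorem inv_mul_eq_map_of_comp_eq {G₁ G₂ H₁ H₂ : Type*} [Group G₁] [Group G₂] [Group H₁]
    [Group H₂] {f : G₁ →* G₂} {ι : H₁ →* H₂} {v : G₁ →* H₁} {w : G₂ →* H₂}
    (hι : Function.Injective ι) (hsq : ∀ g, ι (v g) = w (f g))
    {a a' : H₁} {β β' : G₂} (ha : ι a = w β) (ha' : ι a' = w β') {g : G₁}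
    (hg : f g = β'⁻¹ * β) :
    a'⁻¹ * a = v g :=
  hι (by rw [hsq, hg, map_mul, map_mul, map_inv, map_inv, ha, ha'])

theorem connecting_hom_well_defined_general
    {G₁ G₂ G₃ H₁ H₂ H₃ K₁ : Type*}
    [Group G₁] [Group G₂] [Group G₃] [Group H₁] [Group H₂] [Group H₃] [Group K₁]
    (f : G₁ →* G₂) (s : G₂ →* G₃)
    (ι : H₁ →* H₂) (j : H₂ →* H₃)
    (v : G₁ →* H₁) (w : G₂ →* H₂) (r : G₃ →* H₃)
    (u : H₁ →* K₁)
    (hrow1 : HomExact f s)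
    (hι : Function.Injective ι) (hrow2 : HomExact ι j)
    (hsq1 : ∀ g, ι (v g) = w (f g))
    (hsq2 : ∀ g, j (w g) = r (s g))
    (hcol1 : HomExact v u)
    (α : G₃) (hα : r α = 1)
    (β β' : G₂) (hβ : s β = α) (hβ' : s β' = α) :
    w β ∈ Set.range ι ∧ w β' ∈ Set.range ι ∧
    ∀ a a' : H₁, ι a = w β → ι a' = w β' → u a = u a' := by
  refine ⟨hrow2.mem_range_of_comp_eq hsq2 (by rw [hβ, hα]),
    hrow2.mem_range_of_comp_eq hsq2 (by rw [hβ', hα]), fun a a' ha ha' => ?_⟩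
  obtain ⟨g, hg⟩ := (hrow1.map_eq_map_iff β β').mp (hβ.trans hβ'.symm)
  exact (hcol1.map_eq_map_iff a a').mpr ⟨g, (inv_mul_eq_map_of_comp_eq hι hsq1 ha ha' hg).symm⟩

/-- Well-definedness of the connecting homomorphism in the non-abelian snake lemma:
if `α ∈ ker r` and `β, β' ∈ G₂` both map to `α` under `s`, then `w β` and `w β'`
lie in (the image of) `H₁`, and the corresponding elements of `H₁` have the same
image under `u : H₁ →* K₁`. -/
theorem connecting_hom_well_defined
    {G₁ G₂ G₃ H₁ H₂ H₃ K₁ : Type*}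
    [Group G₁] [Group G₂] [Group G₃] [Group H₁] [Group H₂] [Group H₃] [Group K₁]
    (f : G₁ →* G₂) (s : G₂ →* G₃)
    (ι : H₁ →* H₂) (j : H₂ →* H₃)
    (v : G₁ →* H₁) (w : G₂ →* H₂) (r : G₃ →* H₃)
    (u : H₁ →* K₁)
    (hrow1 : HomExact f s) (hs : Function.Surjective s)
    (hι : Function.Injective ι) (hrow2 : HomExact ι j)
    (hsq1 : ∀ g, ι (v g) = w (f g))
    (hsq2 : ∀ g, j (w g) = r (s g))
    (hcol1 : HomExact v u)
    (α : G₃) (hα : r α = 1)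
    (β β' : G₂) (hβ : s β = α) (hβ' : s β' = α) :
    w β ∈ Set.range ι ∧ w β' ∈ Set.range ι ∧
    ∀ a a' : H₁, ι a = w β → ι a' = w β' → u a = u a' :=
  connecting_hom_well_defined_general f s ι j v w r u hrow1 hι hrow2 hsq1 hsq2 hcol1 α hα β β' hβ
    hβ'
end
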